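/- Suppose n ≥ t ≥ 2 are integers and k is a field such that (pd(R/I_t(L_n)) − 1)·(⌊t/2⌋ + 1) < n − t, where R = k[x_1,…,x_n]. Then there does not exist a good partition of the generators of I_t(L_n). -/

import Mathlib

open MvPolynomial CategoryTheory

/-- The projective dimension (in `ℕ∞`) of an `R`-module `M`: the least `n` such that `M`
admits a projective resolution vanishing in homological degrees `> n`. -/
noncomputable def projDimN (R : Type) [CommRing R] (M : Type) [AddCommGroup M] [Module R M] : ℕ∞ :=
  sInf {n : ℕ∞ | ∃ P : ProjectiveResolution (ModuleCat.of R M),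
    ∀ i : ℕ, n < (i : ℕ∞) → Limits.IsZero (P.complex.X i)}

/-- The arithmetical rank of an ideal `I`: the least number of elements generating `I`
up to radical. -/
noncomputable def araI {R : Type} [CommRing R] (I : Ideal R) : ℕ :=
  sInf {s : ℕ | ∃ f : Fin s → R, Ideal.radical (Ideal.span (Set.range f)) = Ideal.radical I}

open Classical in
/-- The projective dimension of an ideal, with the convention `pd (0) = -1`. -/
noncomputable def pdIdealZ {R : Type} [CommRing R] (I : Ideal R) : WithTop ℤ :=
  if I = ⊥ then -1 else (projDimN R I).map (fun n : ℕ => (n : ℤ))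

section Line

variable (K : Type) [Field K]

/-- The monomial `x_{i+1} x_{i+2} ⋯ x_{i+t}` (on `0`-indexed variables, the product
`X i ⋯ X (i+t-1)`), corresponding to a directed path of length `t` in the line graph
`L_n`. -/
noncomputable def lineMon (n t i : ℕ) (h : i + t ≤ n) : MvPolynomial (Fin n) K :=
  ∏ j : Fin t, X (⟨i + j, by omega⟩ : Fin n)

/-- The set of minimal monomial generators of the path ideal `I_t(L_n)`. -/
def lineGens (n t : ℕ) : Set (MvPolynomial (Fin n) K) :=
  {m | ∃ (i : ℕ) (h : i + t ≤ n), m = lineMon K n t i h}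

/-- The path ideal `I_t(L_n)` of the line graph `L_n`. -/
noncomputable def linePathIdeal (n t : ℕ) : Ideal (MvPolynomial (Fin n) K) :=
  Ideal.span (lineGens K n t)

/-- A good partition `P_0, …, P_r` of the generators of `I_t(L_n)`: a partition of
`G(I_t(L_n))` with `r + 1 = pd(R/I_t(L_n))`, such that `P_0` is a singleton and any two
distinct elements `p, p'` of a part `P_i` with `0 < i ≤ r` admit an element of an earlier
part `P_{i'}`, `i' < i`, dividing `p * p'`. -/
def IsGoodPartition (n t : ℕ) (r : ℕ) (P : ℕ → Set (MvPolynomial (Fin n) K)) : Prop :=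
  ((r : ℕ∞) + 1 =
      projDimN (MvPolynomial (Fin n) K) (MvPolynomial (Fin n) K ⧸ linePathIdeal K n t)) ∧
  (∀ i ≤ r, ∀ j ≤ r, i ≠ j → Disjoint (P i) (P j)) ∧
  (⋃ i ≤ r, P i) = lineGens K n t ∧
  (∃ p, P 0 = {p}) ∧
  (∀ i, 0 < i → i ≤ r → ∀ p ∈ P i, ∀ p' ∈ P i, p ≠ p' →
    ∃ i' < i, ∃ q ∈ P i', q ∣ p * p')

end Line


/-!
Index the generators of `I_t(L_n)` by their first variable, `m_a = x_a ⋯ x_{a+t-1}`. If `m_a`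
and `m_b`, `a < b`, lie in the same part `P_i` with `i > 0`, some generator `m_l` of an earlier
part divides `m_a m_b`; as the parts are disjoint, `l ≠ a, b`, and then
`[l, l+t) ⊆ [a, a+t) ∪ [b, b+t)` forces `2 ≤ b - a ≤ t`. So each of the `r` later parts holds at
most `⌊t/2⌋ + 1` generators, and counting the `n - t + 1` generators gives
`n - t ≤ r (⌊t/2⌋ + 1) = (pd(R/I_t(L_n)) - 1)(⌊t/2⌋ + 1)`.
-/

open Finset

section LineMonomials

variable {K : Type} [Field K] {n t : ℕ}

theorem X_dvd_lineMon_iff {a j : ℕ} (ha : a + t ≤ n) (hj : j < n) :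
    X ⟨j, hj⟩ ∣ lineMon K n t a ha ↔ j ∈ Set.Ico a (a + t) := by
  rw [lineMon, X_prime.dvd_finsetProd_iff]
  simp only [Finset.mem_univ, true_and, X_dvd_X, Fin.ext_iff, Set.mem_Ico]
  constructor
  · rintro ⟨k, rfl⟩
    omega
  · intro hja
    exact ⟨⟨j - a, by omega⟩, by simp only; omega⟩

theorem Ico_subset_union_of_lineMon_dvd_mul {a b l : ℕ} (ha : a + t ≤ n) (hb : b + t ≤ n)
    (hl : l + t ≤ n) (h : lineMon K n t l hl ∣ lineMon K n t a ha * lineMon K n t b hb) :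
    Set.Ico l (l + t) ⊆ Set.Ico a (a + t) ∪ Set.Ico b (b + t) := by
  intro j hj
  have hjn : j < n := by grind
  have hX : X ⟨j, hjn⟩ ∣ lineMon K n t a ha * lineMon K n t b hb :=
    ((X_dvd_lineMon_iff hl hjn).2 hj).trans h
  rcases X_prime.dvd_or_dvd hX with hXa | hXb
  · exact Or.inl ((X_dvd_lineMon_iff ha hjn).1 hXa)
  · exact Or.inr ((X_dvd_lineMon_iff hb hjn).1 hXb)

theorem eq_of_lineMon_eq (ht : 0 < t) {a b : ℕ} (ha : a + t ≤ n) (hb : b + t ≤ n)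
    (h : lineMon K n t a ha = lineMon K n t b hb) : a = b := by
  have hsub : ∀ {a b : ℕ} (ha : a + t ≤ n) (hb : b + t ≤ n),
      lineMon K n t a ha = lineMon K n t b hb → b ≤ a := by
    intro a b ha hb h
    have hdvd : lineMon K n t a ha ∣ lineMon K n t b hb * lineMon K n t b hb :=
      h ▸ dvd_mul_right _ _
    have := Ico_subset_union_of_lineMon_dvd_mul hb hb ha hdvd
    rw [Set.union_self, Set.Ico_subset_Ico_iff (by omega)] at this
    exact this.1
  exact le_antisymm (hsub hb ha h.symm) (hsub ha hb h)

end LineMonomials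

theorem gap_bounds_of_Ico_subset_union {t a b l : ℕ} (ht : 0 < t) (hla : l ≠ a) (hlb : l ≠ b)
    (hab : a < b) (h : Set.Ico l (l + t) ⊆ Set.Ico a (a + t) ∪ Set.Ico b (b + t)) :
    a + 2 ≤ b ∧ b ≤ a + t := by
  have hmem : ∀ j, l ≤ j → j < l + t → (a ≤ j ∧ j < a + t) ∨ (b ≤ j ∧ j < b + t) :=
    fun j hj₁ hj₂ => h ⟨hj₁, hj₂⟩
  have hl := hmem l le_rfl (by omega)
  have hlast := hmem (l + t - 1) (by omega) (by omega)
  by_cases hat : l ≤ a + t ∧ a + t < l + t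
  · have := hmem (a + t) hat.1 hat.2
    omega
  · omega

theorem Finset.card_le_div_two_add_one_of_gaps {t : ℕ} (s : Finset ℕ)
    (hs : ∀ a ∈ s, ∀ b ∈ s, a < b → a + 2 ≤ b ∧ b ≤ a + t) : #s ≤ t / 2 + 1 := by
  rcases s.eq_empty_or_nonempty with rfl | hne
  · simp
  set m := s.min' hne
  have hm : m ∈ s := s.min'_mem hne
  have hge : ∀ a ∈ s, m ≤ a := fun a ha => s.min'_le a ha
  have hle : ∀ a ∈ s, a ≤ m + t := by
    intro a ha
    rcases (hge a ha).eq_or_lt with e | hlt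
    · omega
    · exact (hs m hm a ha hlt).2
  -- halving the offset from the minimum is injective since distinct elements are 2 apart
  have hinj : Set.InjOn (fun a => (a - m) / 2) s := by
    intro a ha b hb hab
    rcases lt_trichotomy a b with hlt | e | hlt
    · have := (hs a ha b hb hlt).1
      have := hge a ha
      simp only at hab
      omega
    · exact e
    · have := (hs b hb a ha hlt).1
      have := hge b hb
      simp only at hab
      omega
  calc #s = #(s.image fun a => (a - m) / 2) := (card_image_of_injOn hinj).symm
    _ ≤ #(range (t / 2 + 1)) := by
        refine card_le_card fun x hx => ?_
        obtain ⟨a, ha, rfl⟩ := mem_image.1 hx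
        have := hge a ha
        have := hle a ha
        rw [mem_range]
        omega
    _ = t / 2 + 1 := card_range _

section GoodPartition

variable {K : Type} [Field K] {n t r : ℕ} {P : ℕ → Set (MvPolynomial (Fin n) K)}

open Classical in
noncomputable def partIndices (K : Type) [Field K] (n t : ℕ)
    (P : ℕ → Set (MvPolynomial (Fin n) K)) (i : ℕ) : Finset ℕ :=
  (range (n - t + 1)).filter fun a => ∃ ha : a + t ≤ n, lineMon K n t a ha ∈ P i

theorem mem_partIndices {i a : ℕ} :
    a ∈ partIndices K n t P i ↔ a < n - t + 1 ∧ ∃ ha : a + t ≤ n, lineMon K n t a ha ∈ P i := by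
  simp only [partIndices, mem_filter, mem_range]

theorem IsGoodPartition.range_subset_biUnion_partIndices (hP : IsGoodPartition K n t r P)
    (htn : t ≤ n) : range (n - t + 1) ⊆ (range (r + 1)).biUnion (partIndices K n t P) := by
  intro a ha
  have hat : a + t ≤ n := by rw [mem_range] at ha; omega
  have hgen : lineMon K n t a hat ∈ ⋃ i ≤ r, P i := hP.2.2.1 ▸ ⟨a, hat, rfl⟩
  obtain ⟨i, hi, hmem⟩ := Set.mem_iUnion₂.1 hgen
  exact mem_biUnion.2 ⟨i, mem_range.2 (by omega), mem_partIndices.2 ⟨mem_range.1 ha, hat, hmem⟩⟩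

theorem IsGoodPartition.card_partIndices_zero_le (hP : IsGoodPartition K n t r P) (ht : 0 < t) :
    #(partIndices K n t P 0) ≤ 1 := by
  obtain ⟨p, hp⟩ := hP.2.2.2.1
  refine card_le_one.2 fun a ha b hb => ?_
  obtain ⟨-, hat, ha⟩ := mem_partIndices.1 ha
  obtain ⟨-, hbt, hb⟩ := mem_partIndices.1 hb
  rw [hp, Set.mem_singleton_iff] at ha hb
  exact eq_of_lineMon_eq ht hat hbt (ha.trans hb.symm)

theorem IsGoodPartition.gap_bounds (hP : IsGoodPartition K n t r P) (ht : 0 < t) {i a b : ℕ}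
    (hi : 0 < i) (hir : i ≤ r) (ha : a ∈ partIndices K n t P i) (hb : b ∈ partIndices K n t P i)
    (hab : a < b) : a + 2 ≤ b ∧ b ≤ a + t := by
  obtain ⟨-, hat, ha⟩ := mem_partIndices.1 ha
  obtain ⟨-, hbt, hb⟩ := mem_partIndices.1 hb
  have hne : lineMon K n t a hat ≠ lineMon K n t b hbt :=
    fun h => hab.ne (eq_of_lineMon_eq ht hat hbt h)
  obtain ⟨i', hi', q, hq, hdvd⟩ := hP.2.2.2.2 i hi hir _ ha _ hb hne
  have hqgen : q ∈ lineGens K n t := hP.2.2.1 ▸ Set.mem_iUnion₂.2 ⟨i', by omega, hq⟩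
  obtain ⟨l, hlt, rfl⟩ := hqgen
  have hq_notMem : lineMon K n t l hlt ∉ P i :=
    Set.disjoint_left.1 (hP.2.1 i' (by omega) i hir hi'.ne) hq
  have hla : l ≠ a := by rintro rfl; exact hq_notMem ha
  have hlb : l ≠ b := by rintro rfl; exact hq_notMem hb
  exact gap_bounds_of_Ico_subset_union ht hla hlb hab
    (Ico_subset_union_of_lineMon_dvd_mul hat hbt hlt hdvd)

theorem IsGoodPartition.sub_le_mul (hP : IsGoodPartition K n t r P) (ht : 0 < t) (htn : t ≤ n) :
    n - t ≤ r * (t / 2 + 1) := by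
  have hlater : ∀ i ∈ range r, #(partIndices K n t P (i + 1)) ≤ t / 2 + 1 := fun i hi =>
    card_le_div_two_add_one_of_gaps _ fun a ha b hb hab =>
      hP.gap_bounds ht i.succ_pos (by rw [mem_range] at hi; omega) ha hb hab
  have := calc
    n - t + 1 = #(range (n - t + 1)) := (card_range _).symm
    _ ≤ #((range (r + 1)).biUnion (partIndices K n t P)) :=
        card_le_card (hP.range_subset_biUnion_partIndices htn)
    _ ≤ ∑ i ∈ range (r + 1), #(partIndices K n t P i) := card_biUnion_le
    _ = ∑ i ∈ range r, #(partIndices K n t P (i + 1)) + #(partIndices K n t P 0) :=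
        sum_range_succ' _ _
    _ ≤ r * (t / 2 + 1) + 1 := by
        gcongr
        · simpa using sum_le_card_nsmul _ _ _ hlater
        · exact hP.card_partIndices_zero_le ht
  omega

end GoodPartition

/-- If `n ≥ t ≥ 2` are such that
`(pd(R/I_t(L_n)) - 1) * (⌊t/2⌋ + 1) < n - t`, then there is no good partition of the
generators of `I_t(L_n)`. -/
theorem no_goodPartition_of_small_projDim
    (n t : ℕ) (ht : 2 ≤ t) (htn : t ≤ n) (K : Type) [Field K]
    (h : (projDimN (MvPolynomial (Fin n) K)
        (MvPolynomial (Fin n) K ⧸ linePathIdeal K n t) - 1) * ((t / 2 + 1 : ℕ) : ℕ∞) <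
      ((n - t : ℕ) : ℕ∞)) :
    ¬ ∃ (r : ℕ) (P : ℕ → Set (MvPolynomial (Fin n) K)), IsGoodPartition K n t r P := by
  rintro ⟨r, P, hP⟩
  have hlt : r * (t / 2 + 1) < n - t := by
    rw [← hP.1, show (r : ℕ∞) + 1 - 1 = r by norm_cast] at h
    exact_mod_cast h
  exact (hP.sub_le_mul (by omega) htn).not_gt hlt
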